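/- Let σ : ℤ[t] → ℤ[q,q⁻¹] be the ring homomorphism sending t to q⁻¹·(1 + q + q²). For every word s ∈ List Bool, let (F₁, F₂, F₃) ∈ ℤ[t]³ be obtained from the seed (1, t² − t − 1, t − 1) by applying, for each letter of s, the move (x, y, z) ↦ (x, t·x·y − z, y) for the letter 0 and (x, y, z) ↦ (y, t·y·z − x, z) for the letter 1; and let (H₁, H₂, H₃) ∈ ℤ[q,q⁻¹]³ be obtained from the seed (q⁻¹, (q⁴+q³+q²+q+1)·q⁻³, (q²+1)·q⁻²) by applying, for each corresponding letter of s, the move (x, y, z) ↦ (x, [3]_q·x·y − z, y) for 0 and (x, y, z) ↦ (y, [3]_q·y·z − x, z) for 1. Then σ(Fᵢ) = q·Hᵢ for i = 1, 2, 3; that is, the t-deformation and the q-deformation of each Markov number satisfy f_w([3]_q/q) = q·h_w(q). -/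

import Mathlib

open LaurentPolynomial

/-- `q` as an element of the Laurent polynomial ring `ℤ[q,q⁻¹]`. -/
noncomputable abbrev q : LaurentPolynomial ℤ := T 1

/-- `q⁻¹` as an element of the Laurent polynomial ring `ℤ[q,q⁻¹]`. -/
noncomputable abbrev qinv : LaurentPolynomial ℤ := T (-1)

/-- The ring homomorphism `σ : ℤ[t] → ℤ[q,q⁻¹]` sending `t` to `q⁻¹·(1 + q + q²)`. -/
noncomputable def σ : Polynomial ℤ →+* LaurentPolynomial ℤ :=
  (Polynomial.aeval (qinv * (1 + q + q ^ 2)) :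
    Polynomial ℤ →ₐ[ℤ] LaurentPolynomial ℤ).toRingHom

/-- One castling move on triples of polynomials in `ℤ[t]`:
`false ↦ (x, t·x·y − z, y)`, `true ↦ (y, t·y·z − x, z)`. -/
noncomputable def tMove (b : Bool)
    (p : Polynomial ℤ × Polynomial ℤ × Polynomial ℤ) :
    Polynomial ℤ × Polynomial ℤ × Polynomial ℤ :=
  match b, p with
  | false, (x, y, z) => (x, Polynomial.X * x * y - z, y)
  | true, (x, y, z) => (y, Polynomial.X * y * z - x, z)

/-- One move on triples of Laurent polynomials:
`false ↦ (x, [3]_q·x·y − z, y)`, `true ↦ (y, [3]_q·y·z − x, z)`. -/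
noncomputable def qMove (b : Bool)
    (p : LaurentPolynomial ℤ × LaurentPolynomial ℤ × LaurentPolynomial ℤ) :
    LaurentPolynomial ℤ × LaurentPolynomial ℤ × LaurentPolynomial ℤ :=
  match b, p with
  | false, (x, y, z) => (x, (1 + q + q ^ 2) * x * y - z, y)
  | true, (x, y, z) => (y, (1 + q + q ^ 2) * y * z - x, z)

/-!
Both recursions are instances of one move `(x, y, z) ↦ (x, c·x·y − z, y)` / `(y, c·y·z − x, z)`
with parameter `c = t` resp. `c = [3]_q`. Applying the ring homomorphism `σ` turns the `t`-move
into the move with parameter `σ t = q⁻¹·[3]_q`, and so does rescaling a triple by `q` applied to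
the `[3]_q`-move, because `q · (c·x·y − z) = (q⁻¹·c)·(q·x)·(q·y) − q·z`. Hence both sides of the
theorem are obtained by the same `q⁻¹·[3]_q`-moves from the same seed.
-/

section MarkovMove

variable {R S : Type*} [CommRing R] [CommRing S]

def markovMove (c : R) : Bool → R × R × R → R × R × R
  | false, (x, y, z) => (x, c * x * y - z, y)
  | true, (x, y, z) => (y, c * y * z - x, z)

def mapTriple (f : R → S) : R × R × R → S × S × S :=
  Prod.map f (Prod.map f f)

theorem map_markovMove (φ : R →+* S) (c : R) (b : Bool) (p : R × R × R) :
    mapTriple φ (markovMove c b p) = markovMove (φ c) b (mapTriple φ p) := by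
  obtain ⟨x, y, z⟩ := p
  cases b <;> simp [markovMove, mapTriple]

theorem smul_markovMove {u v : R} (huv : u * v = 1) (c : R) (b : Bool) (p : R × R × R) :
    u • markovMove c b p = markovMove (v * c) b (u • p) := by
  obtain ⟨x, y, z⟩ := p
  cases b <;> simp only [markovMove, Prod.smul_mk, smul_eq_mul, Prod.mk.injEq, true_and,
    and_true]
  · linear_combination (-(u * c * x * y)) * huv
  · linear_combination (-(u * c * y * z)) * huv

theorem foldl_map_markovMove (φ : R →+* S) (c : R) (s : List Bool) (p : R × R × R) :
    mapTriple φ (s.foldl (fun p b => markovMove c b p) p) =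
      s.foldl (fun p b => markovMove (φ c) b p) (mapTriple φ p) :=
  (List.foldl_hom _ fun p b => (map_markovMove φ c b p).symm).symm

theorem foldl_smul_markovMove {u v : R} (huv : u * v = 1) (c : R) (s : List Bool)
    (p : R × R × R) :
    u • s.foldl (fun p b => markovMove c b p) p =
      s.foldl (fun p b => markovMove (v * c) b p) (u • p) :=
  (List.foldl_hom (u • ·) fun p b => (smul_markovMove huv c b p).symm).symm

end MarkovMove

theorem tMove_eq_markovMove : tMove = markovMove Polynomial.X := by
  ext b ⟨x, y, z⟩ <;> cases b <;> rfl

theorem qMove_eq_markovMove : qMove = markovMove (1 + q + q ^ 2) := by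
  ext b ⟨x, y, z⟩ <;> cases b <;> rfl

theorem q_mul_qinv : q * qinv = 1 := by
  rw [← T_add, add_neg_cancel, T_zero]

theorem σ_X : σ Polynomial.X = qinv * (1 + q + q ^ 2) :=
  Polynomial.aeval_X _

theorem mapTriple_σ_seed :
    mapTriple σ (1, Polynomial.X ^ 2 - Polynomial.X - 1, Polynomial.X - 1) =
      q • (qinv, (q ^ 4 + q ^ 3 + q ^ 2 + q + 1) * qinv ^ 3, (q ^ 2 + 1) * qinv ^ 2) := by
  simp only [mapTriple, Prod.map, map_sub, map_pow, map_one, σ_X, Prod.smul_mk, smul_eq_mul,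
    Prod.mk.injEq]
  refine ⟨q_mul_qinv.symm, ?_, ?_⟩
  · linear_combination (qinv + 2 * q * qinv + q ^ 2 * qinv + 1 -
      (q ^ 4 + q ^ 3 + q ^ 2 + q + 1) * qinv ^ 2) * q_mul_qinv
  · linear_combination (1 - q ^ 2 * qinv - qinv) * q_mul_qinv

/-- For every word `s : List Bool`, letting `(F₁, F₂, F₃)` be obtained from the seed
`(1, t² − t − 1, t − 1)` in `ℤ[t]³` by the castling moves along `s`, and `(H₁, H₂, H₃)`
from the seed `(q⁻¹, (q⁴+q³+q²+q+1)·q⁻³, (q²+1)·q⁻²)` in `ℤ[q,q⁻¹]³` by the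
corresponding `q`-moves, one has `σ(Fᵢ) = q·Hᵢ` for `i = 1, 2, 3`:
the `t`- and `q`-deformations of Markov numbers satisfy `f_w([3]_q/q) = q·h_w(q)`. -/
theorem tDeformation_vs_qDeformation (s : List Bool) :
    (fun P : Polynomial ℤ × Polynomial ℤ × Polynomial ℤ =>
        (σ P.1, σ P.2.1, σ P.2.2))
      (s.foldl (fun p b => tMove b p)
        (1, Polynomial.X ^ 2 - Polynomial.X - 1, Polynomial.X - 1)) =
    (fun P : LaurentPolynomial ℤ × LaurentPolynomial ℤ × LaurentPolynomial ℤ =>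
        (q * P.1, q * P.2.1, q * P.2.2))
      (s.foldl (fun p b => qMove b p)
        (qinv, (q ^ 4 + q ^ 3 + q ^ 2 + q + 1) * qinv ^ 3, (q ^ 2 + 1) * qinv ^ 2)) := by
  change mapTriple σ _ = q • _
  rw [tMove_eq_markovMove, qMove_eq_markovMove, foldl_map_markovMove, σ_X,
    foldl_smul_markovMove q_mul_qinv, mapTriple_σ_seed]
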